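/- arXiv:1901.00180 — 8 statements merged into one kernel-verified Lean document; each statement's English description precedes it below -/
import Mathlib

section
/- Let d ≥ 1 and let Q and μ be nonatomic Borel probability measures on ℝ^d. Then 0 ≤ D(x|Q,μ) ≤ 1 for every x ∈ ℝ^d; consequently, for every constant-speed path β : [0,1] → ℝ^d whose arc-length measure equals μ, the curve depth ∫ D(x|Q,μ) dμ(x) lies in the interval [0,1]. (Boundedness part of Theorem 3.2 of the paper.) -/
/-!
If `D(x) > 1`, then `μ(H_{u,x}) < Q(H_{u,x})` for every direction `u ≠ 0`. Average both sides
over `u` uniformly distributed in the unit ball. By Fubini, the average of `P(H_{u,x})` is the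
`P`-average over `y` of the proportion of directions `u` with `⟪y - x, u⟫ ≥ 0`; this proportion is
`1/2` for `y ≠ x` (the symmetry `u ↦ -u` swaps the two sides of a null hyperplane) and `1` for
`y = x`. Hence the average is exactly `1/2` for `Q`, which has no atom at `x`, and at least `1/2`
for `μ`: a contradiction.
-/

open MeasureTheory Set Filter
open scoped ENNReal RealInnerProductSpace

noncomputable section

abbrev Euc (d : ℕ) := EuclideanSpace ℝ (Fin d)

def halfSpace {d : ℕ} (u x : Euc d) : Set (Euc d) := {y | ⟪x, u⟫ ≤ ⟪y, u⟫}

/-- Point curve depth `D(x | Q, μ)`, with the `ℝ≥0∞` division conventions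
`a / 0 = ∞` for `a > 0` and `0 / 0 = 0`. -/
def pointDepth {d : ℕ} (Q μ : Measure (Euc d)) (x : Euc d) : ℝ≥0∞ :=
  ⨅ (u : Euc d) (_ : ‖u‖ = 1), Q (halfSpace u x) / μ (halfSpace u x)

def curveDepth {d : ℕ} (Q μ : Measure (Euc d)) : ℝ≥0∞ :=
  ∫⁻ x, pointDepth Q μ x ∂μ

section HalfBall

variable {E : Type*} [NormedAddCommGroup E] [InnerProductSpace ℝ E] [FiniteDimensional ℝ E]
  [MeasurableSpace E] [BorelSpace E]

lemma measure_inner_nonneg_inter_ball (μ : Measure E) [μ.IsAddHaarMeasure] {w : E} (hw : w ≠ 0)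
    (r : ℝ) :
    μ ({u | 0 ≤ ⟪w, u⟫} ∩ Metric.ball 0 r) = μ (Metric.ball 0 r) / 2 := by
  set A := {u : E | 0 ≤ ⟪w, u⟫} ∩ Metric.ball 0 r
  set B := {u : E | ⟪w, u⟫ ≤ 0} ∩ Metric.ball 0 r
  have hBA : μ B = μ A := by
    have : Neg.neg ⁻¹' A = B := by ext u; simp [A, B]
    rw [← this, Measure.measure_preimage_neg]
  have hAB : A ∪ B = Metric.ball 0 r := by
    ext u; simp only [A, B, mem_union, mem_inter_iff, mem_ofPred_eq]; grind
  have hker : μ (LinearMap.ker (innerSL ℝ w).toLinearMap) = 0 := by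
    refine Measure.addHaar_submodule μ _ fun htop => hw ?_
    have : w ∈ LinearMap.ker (innerSL ℝ w).toLinearMap := htop ▸ Submodule.mem_top
    simpa using this
  have hABnull : μ (A ∩ B) = 0 :=
    measure_mono_null (fun u hu => le_antisymm hu.2.1 hu.1.1) hker
  have hBmeas : MeasurableSet B :=
    (measurableSet_le (by fun_prop) measurable_const).inter measurableSet_ball
  have := measure_union_add_inter A hBmeas (μ := μ)
  rw [hAB, hABnull, add_zero, hBA, ← two_mul] at this
  exact (ENNReal.eq_div_iff two_ne_zero ENNReal.ofNat_ne_top).mpr this.symm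

end HalfBall

namespace CurveDepth

variable {d : ℕ}

lemma halfSpace_smul (u x : Euc d) {c : ℝ} (hc : 0 < c) :
    halfSpace (c • u) x = halfSpace u x := by
  ext y
  simp only [halfSpace, mem_ofPred_eq, real_inner_smul_right]
  exact mul_le_mul_iff_right₀ hc

lemma pointDepth_le_div {Q μ : Measure (Euc d)} {u : Euc d} (hu : u ≠ 0) (x : Euc d) :
    pointDepth Q μ x ≤ Q (halfSpace u x) / μ (halfSpace u x) := by
  have hnorm : ‖(‖u‖⁻¹ : ℝ) • u‖ = 1 := norm_smul_inv_norm hu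
  have hc : (0 : ℝ) < ‖u‖⁻¹ := inv_pos.mpr (norm_pos_iff.mpr hu)
  rw [← halfSpace_smul u x hc]
  exact iInf₂_le (f := fun (v : Euc d) (_ : ‖v‖ = 1) => Q (halfSpace v x) / μ (halfSpace v x))
    _ hnorm

lemma measurableSet_halfSpace_prod (x : Euc d) :
    MeasurableSet {p : Euc d × Euc d | p.2 ∈ halfSpace p.1 x} :=
  measurableSet_le (g := fun p : Euc d × Euc d => ⟪p.2, p.1⟫) (by fun_prop) (by fun_prop)

lemma lintegral_measure_halfSpace (P : Measure (Euc d)) [SFinite P] (x : Euc d) :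
    ∫⁻ u in Metric.ball 0 1, P (halfSpace u x)
      = ∫⁻ y, volume ({u | 0 ≤ ⟪y - x, u⟫} ∩ Metric.ball (0 : Euc d) 1) ∂P := by
  have hT := measurableSet_halfSpace_prod x
  have hprod : ∫⁻ u in Metric.ball 0 1, P (halfSpace u x)
      = ((volume.restrict (Metric.ball (0 : Euc d) 1)).prod P)
          {p : Euc d × Euc d | p.2 ∈ halfSpace p.1 x} := (Measure.prod_apply hT).symm
  rw [hprod, Measure.prod_apply_symm hT]
  refine lintegral_congr fun y => ?_
  have hset : (·, y) ⁻¹' {p : Euc d × Euc d | p.2 ∈ halfSpace p.1 x} = {u | 0 ≤ ⟪y - x, u⟫} := by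
    ext u
    simp [halfSpace, inner_sub_left]
  rw [hset, Measure.restrict_apply (measurableSet_le measurable_const (by fun_prop))]

lemma volume_ball_div_two_le_lintegral_measure_halfSpace (P : Measure (Euc d))
    [IsProbabilityMeasure P] (x : Euc d) :
    volume (Metric.ball (0 : Euc d) 1) / 2 ≤ ∫⁻ u in Metric.ball 0 1, P (halfSpace u x) := by
  rw [lintegral_measure_halfSpace]
  calc volume (Metric.ball (0 : Euc d) 1) / 2
      = ∫⁻ _, volume (Metric.ball (0 : Euc d) 1) / 2 ∂P := by simp
    _ ≤ _ := lintegral_mono fun y => by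
      rcases eq_or_ne y x with rfl | hy
      · simpa using ENNReal.half_le_self
      · exact (measure_inner_nonneg_inter_ball _ (sub_ne_zero.mpr hy) 1).ge

lemma lintegral_measure_halfSpace_eq (P : Measure (Euc d)) [IsProbabilityMeasure P]
    {x : Euc d} (hx : P {x} = 0) :
    ∫⁻ u in Metric.ball 0 1, P (halfSpace u x) = volume (Metric.ball (0 : Euc d) 1) / 2 := by
  have hne : ∀ᵐ y ∂P, y ≠ x := measure_eq_zero_iff_ae_notMem.mp hx
  rw [lintegral_measure_halfSpace]
  calc _ = ∫⁻ _, volume (Metric.ball (0 : Euc d) 1) / 2 ∂P := by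
        refine lintegral_congr_ae (hne.mono fun y hy => ?_)
        exact measure_inner_nonneg_inter_ball _ (sub_ne_zero.mpr hy) 1
    _ = _ := by simp

lemma exists_measure_halfSpace_le [Nontrivial (Euc d)] (Q μ : Measure (Euc d))
    [IsProbabilityMeasure Q] [IsProbabilityMeasure μ] {x : Euc d} (hQx : Q {x} = 0) :
    ∃ u ≠ 0, Q (halfSpace u x) ≤ μ (halfSpace u x) := by
  by_contra! hlt
  have hae : ∀ᵐ u ∂volume.restrict (Metric.ball (0 : Euc d) 1),
      μ (halfSpace u x) < Q (halfSpace u x) :=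
    ae_restrict_of_ae ((measure_eq_zero_iff_ae_notMem.mp (measure_singleton 0)).mono hlt)
  have hball : volume.restrict (Metric.ball (0 : Euc d) 1) ≠ 0 := by
    simpa using (Metric.measure_ball_pos volume (0 : Euc d) one_pos).ne'
  have hμfin : ∫⁻ u in Metric.ball 0 1, μ (halfSpace u x) ≠ ∞ := by
    refine ne_top_of_le_ne_top ?_ (lintegral_mono fun u => prob_le_one)
    rw [setLIntegral_one]
    exact measure_ball_lt_top.ne
  have hQmeas : Measurable fun u : Euc d => Q (halfSpace u x) :=
    measurable_measure_prodMk_left (measurableSet_halfSpace_prod x)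
  have := lintegral_strict_mono hball hQmeas.aemeasurable hμfin hae
  rw [lintegral_measure_halfSpace_eq Q hQx] at this
  exact (volume_ball_div_two_le_lintegral_measure_halfSpace μ x).not_gt this

lemma pointDepth_le_one [Nontrivial (Euc d)] (Q μ : Measure (Euc d))
    [IsProbabilityMeasure Q] [IsProbabilityMeasure μ] {x : Euc d} (hQx : Q {x} = 0) :
    pointDepth Q μ x ≤ 1 := by
  obtain ⟨u, hu, hle⟩ := exists_measure_halfSpace_le Q μ hQx
  exact (pointDepth_le_div hu x).trans (ENNReal.div_le_of_le_mul (by rwa [one_mul]))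

end CurveDepth

theorem pointDepth_le_one_and_curveDepth_le_one_general
    (d : ℕ) (hd : 1 ≤ d)
    (Q μ : Measure (Euc d)) [IsProbabilityMeasure Q] [IsProbabilityMeasure μ]
    (hQatom : ∀ x, Q {x} = 0) :
    (∀ x : Euc d, pointDepth Q μ x ≤ 1) ∧
    (∀ (β : ℝ → Euc d) (L : ℝ), ContinuousOn β (Icc 0 1) → 0 < L →
      (∀ t ∈ Icc (0:ℝ) 1, eVariationOn β (Icc 0 t) = ENNReal.ofReal (t * L)) →
      (volume.restrict (Icc (0:ℝ) 1)).map β = μ →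
      curveDepth Q μ ≤ 1) := by
  have : Nonempty (Fin d) := ⟨⟨0, hd⟩⟩
  have hpoint (x : Euc d) : pointDepth Q μ x ≤ 1 := CurveDepth.pointDepth_le_one Q μ (hQatom x)
  refine ⟨hpoint, fun _ _ _ _ _ _ => ?_⟩
  calc curveDepth Q μ ≤ ∫⁻ _, 1 ∂μ := lintegral_mono hpoint
    _ = 1 := by simp

/-- Boundedness part of Theorem 3.2 of the paper: for nonatomic Borel probability
measures `Q` and `μ`, the point curve depth lies in `[0,1]` everywhere (nonnegativity
is automatic in `ℝ≥0∞`), and consequently the curve depth of any constant-speed path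
whose arc-length measure is `μ` lies in `[0,1]`. -/
theorem pointDepth_le_one_and_curveDepth_le_one
    (d : ℕ) (hd : 1 ≤ d)
    (Q μ : Measure (Euc d)) [IsProbabilityMeasure Q] [IsProbabilityMeasure μ]
    (hQatom : ∀ x, Q {x} = 0) (hμatom : ∀ x, μ {x} = 0) :
    (∀ x : Euc d, pointDepth Q μ x ≤ 1) ∧
    (∀ (β : ℝ → Euc d) (L : ℝ), ContinuousOn β (Icc 0 1) → 0 < L →
      (∀ t ∈ Icc (0:ℝ) 1, eVariationOn β (Icc 0 t) = ENNReal.ofReal (t * L)) →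
      (volume.restrict (Icc (0:ℝ) 1)).map β = μ →
      curveDepth Q μ ≤ 1) :=
  pointDepth_le_one_and_curveDepth_le_one_general d hd Q μ hQatom
end
end

section
/- Let d ≥ 1 and let f : ℝ^d → ℝ^d be a similarity transformation, f(x) = r·(A x) + b, where r > 0, A is a linear isometry of ℝ^d (a d×d orthogonal matrix), and b ∈ ℝ^d. Then for all Borel probability measures Q and μ on ℝ^d and every x ∈ ℝ^d, D(f(x) | f_*Q, f_*μ) = D(x | Q, μ), where f_* denotes pushforward of measures under f; consequently ∫ D(y | f_*Q, f_*μ) d(f_*μ)(y) = ∫ D(x | Q, μ) dμ(x). (Similarity invariance of the curve depth: Lemma S5.4 / similarity-invariance part of Theorem 3.2 of the paper.) -/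
open MeasureTheory Set Filter
open scoped ENNReal RealInnerProductSpace

noncomputable section

/-!
For `f z = r • A z + b` with `r > 0`, the preimage under `f` of the halfspace `H_{u, f x}` is
`H_{A⁻¹ u, x}`, and `u ↦ A⁻¹ u` permutes the unit sphere; so the two infima defining the depths
range over the same ratios `Q(H)/μ(H)`. Since `f` is a measurable bijection, integrating the
pointwise identity against `f_* μ` gives the identity for the curve depth.
-/

section

variable {d : ℕ}

lemma measurableSet_halfSpace (u x : Euc d) : MeasurableSet (halfSpace u x) :=
  (isClosed_le continuous_const (continuous_id.inner continuous_const)).measurableSet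

def similarityHomeomorph {r : ℝ} (hr : r ≠ 0) (A : Euc d ≃ₗᵢ[ℝ] Euc d) (b : Euc d) :
    Euc d ≃ₜ Euc d :=
  A.toHomeomorph.trans ((Homeomorph.smulOfNeZero r hr).trans (Homeomorph.addRight b))

lemma halfSpace_preimage_similarity {r : ℝ} (hr : 0 < r) (A : Euc d ≃ₗᵢ[ℝ] Euc d)
    (b u x : Euc d) :
    (fun z => r • A z + b) ⁻¹' halfSpace u (r • A x + b) = halfSpace (A.symm u) x := by
  ext z
  simp only [halfSpace, mem_preimage, mem_ofPred_eq, inner_add_left, real_inner_smul_left,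
    add_le_add_iff_right, ← A.inner_map_map _ (A.symm u), A.apply_symm_apply]
  exact mul_le_mul_iff_right₀ hr

lemma pointDepth_map_similarity {r : ℝ} (hr : 0 < r) (A : Euc d ≃ₗᵢ[ℝ] Euc d) (b : Euc d)
    (Q μ : Measure (Euc d)) (x : Euc d) :
    pointDepth (Q.map (fun z => r • A z + b)) (μ.map (fun z => r • A z + b)) (r • A x + b)
      = pointDepth Q μ x := by
  have hf : Measurable (fun z => r • A z + b) := (similarityHomeomorph hr.ne' A b).measurable
  have hratio : ∀ u, Q.map (fun z => r • A z + b) (halfSpace u (r • A x + b))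
        / μ.map (fun z => r • A z + b) (halfSpace u (r • A x + b))
      = Q (halfSpace (A.symm u) x) / μ (halfSpace (A.symm u) x) := fun u => by
    rw [Measure.map_apply hf (measurableSet_halfSpace _ _),
      Measure.map_apply hf (measurableSet_halfSpace _ _), halfSpace_preimage_similarity hr]
  simp only [pointDepth, hratio]
  conv_rhs => rw [← A.symm.surjective.iInf_comp]
  simp only [LinearIsometryEquiv.norm_map]

lemma curveDepth_map_of_pointDepth_map (e : Euc d ≃ᵐ Euc d) (Q μ : Measure (Euc d))
    (h : ∀ x, pointDepth (Q.map e) (μ.map e) (e x) = pointDepth Q μ x) :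
    curveDepth (Q.map e) (μ.map e) = curveDepth Q μ := by
  rw [curveDepth, lintegral_map_equiv]
  exact lintegral_congr h

end

theorem pointDepth_similarity_invariance_general
    (d : ℕ)
    (r : ℝ) (hr : 0 < r) (A : Euc d ≃ₗᵢ[ℝ] Euc d) (b : Euc d)
    (Q μ : Measure (Euc d)) :
    (∀ x : Euc d,
      pointDepth (Q.map (fun z => r • A z + b)) (μ.map (fun z => r • A z + b))
          (r • A x + b)
        = pointDepth Q μ x) ∧
    curveDepth (Q.map (fun z => r • A z + b)) (μ.map (fun z => r • A z + b))
      = curveDepth Q μ :=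
  ⟨pointDepth_map_similarity hr A b Q μ,
    curveDepth_map_of_pointDepth_map (similarityHomeomorph hr.ne' A b).toMeasurableEquiv Q μ
      (pointDepth_map_similarity hr A b Q μ)⟩

/-- Similarity invariance of the curve depth (Lemma S5.4 / Theorem 3.2 of the paper):
for any similarity `f x = r • (A x) + b` with `r > 0`, `A` a linear isometry
(orthogonal transformation) of `ℝ^d` and `b ∈ ℝ^d`, the point curve depth and the
curve depth are invariant under the pushforward by `f`. -/
theorem pointDepth_similarity_invariance
    (d : ℕ) (hd : 1 ≤ d)
    (r : ℝ) (hr : 0 < r) (A : Euc d ≃ₗᵢ[ℝ] Euc d) (b : Euc d)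
    (Q μ : Measure (Euc d)) [IsProbabilityMeasure Q] [IsProbabilityMeasure μ] :
    (∀ x : Euc d,
      pointDepth (Q.map (fun z => r • A z + b)) (μ.map (fun z => r • A z + b))
          (r • A x + b)
        = pointDepth Q μ x) ∧
    curveDepth (Q.map (fun z => r • A z + b)) (μ.map (fun z => r • A z + b))
      = curveDepth Q μ :=
  pointDepth_similarity_invariance_general d r hr A b Q μ
end
end

section
/- Let d ≥ 1, let Q be a Borel probability measure on ℝ^d, and let ℓ > 0. Let (β_n)_{n≥1} be a sequence of continuous constant-speed paths [0,1] → ℝ^d, each of length L(β_n) ∈ (0, ℓ] and with nonatomic arc-length measure μ_n, and suppose that R_n := inf_{t ∈ [0,1]} |β_n(t)|₂ → ∞ as n → ∞. Then the curve depths vanish: ∫ D(x | Q, μ_n) dμ_n(x) → 0 as n → ∞. (Vanishing at infinity: Lemma S5.5 / vanishing-at-infinity part of Theorem 3.2 of the paper.) -/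
open MeasureTheory Set Filter
open scoped ENNReal RealInnerProductSpace

noncomputable section

lemma pointDepth_le {d : ℕ} (Q μ : Measure (Euc d)) (x v : Euc d) (hv : ‖v‖ = 1) :
    pointDepth Q μ x ≤ Q (halfSpace v x) / μ (halfSpace v x) :=
  iInf₂_le v hv

lemma halfSpace_measurableSet {d : ℕ} (u x : Euc d) : MeasurableSet (halfSpace u x) :=
  (isClosed_le continuous_const ((continuous_id.inner continuous_const))).measurableSet

/-- The set of points whose forward halfspace in direction `u` has `μ`-mass `< δ` is contained
in a measurable set of `μ`-mass at most `δ`. -/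
lemma tail_superset {d : ℕ} (μ : Measure (Euc d)) (u : Euc d) (δ : ℝ≥0∞) :
    ∃ U : Set (Euc d), MeasurableSet U ∧ {x | μ (halfSpace u x) < δ} ⊆ U ∧ μ U ≤ δ := by
  classical
  set f : Euc d → ℝ := fun x => ⟪x, u⟫ with hfdef
  have hfc : Continuous f := continuous_id.inner continuous_const
  have hmeasIci : ∀ t : ℝ, MeasurableSet {y : Euc d | t ≤ f y} := fun t =>
    (isClosed_le continuous_const hfc).measurableSet
  set J : Set ℝ := {t | μ {y | t ≤ f y} < δ} with hJdef
  have hJup : ∀ s t : ℝ, s ∈ J → s ≤ t → t ∈ J := by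
    intro s t hs hst
    exact lt_of_le_of_lt (measure_mono (fun y hy => le_trans hst hy)) hs
  have hT : {x | μ (halfSpace u x) < δ} = f ⁻¹' J := rfl
  rcases eq_empty_or_nonempty J with hJe | hJne
  · refine ⟨∅, MeasurableSet.empty, ?_, by simp⟩
    rw [hT, hJe]; simp
  by_cases hbdd : BddBelow J
  · set a := sInf J with ha
    by_cases haJ : a ∈ J
    · refine ⟨{x | a ≤ f x}, hmeasIci a, ?_, le_of_lt haJ⟩
      intro x hx
      exact csInf_le hbdd hx
    · refine ⟨{x | a < f x}, ?_, ?_, ?_⟩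
      · exact (hfc.measurable measurableSet_Ioi : MeasurableSet (f ⁻¹' Ioi a))
      · intro x hx
        have h1 : a ≤ f x := csInf_le hbdd hx
        rcases lt_or_eq_of_le h1 with h | h
        · exact h
        · exact absurd (h ▸ hx) haJ
      · have hUnion : {x : Euc d | a < f x} = ⋃ k : ℕ, {x | a + 1/((k:ℝ)+1) ≤ f x} := by
          ext x
          simp only [mem_iUnion, mem_setOf_eq]
          constructor
          · intro h
            obtain ⟨k, hk⟩ := exists_nat_one_div_lt (sub_pos.mpr h)
            exact ⟨k, by linarith⟩
          · rintro ⟨k, hk⟩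
            have hpos : (0:ℝ) < 1/((k:ℝ)+1) := by positivity
            linarith
        have hmono : Monotone (fun k : ℕ => {x : Euc d | a + 1/((k:ℝ)+1) ≤ f x}) := by
          intro k m hkm x hx
          have h1 : 1/((m:ℝ)+1) ≤ 1/((k:ℝ)+1) := by
            apply one_div_le_one_div_of_le (by positivity)
            have : (k:ℝ) ≤ m := by exact_mod_cast hkm
            linarith
          simp only [mem_setOf_eq] at hx ⊢
          linarith
        rw [hUnion, hmono.directed_le.measure_iUnion]
        refine iSup_le fun k => ?_
        have hk : a + 1/((k:ℝ)+1) ∈ J := by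
          have hlt : a < a + 1/((k:ℝ)+1) := by
            have : (0:ℝ) < 1/((k:ℝ)+1) := by positivity
            linarith
          obtain ⟨j, hjJ, hj⟩ := exists_lt_of_csInf_lt hJne hlt
          exact hJup j _ hjJ hj.le
        exact le_of_lt hk
  · refine ⟨univ, MeasurableSet.univ, subset_univ _, ?_⟩
    have hUnion : (univ : Set (Euc d)) = ⋃ k : ℕ, {x | -(k:ℝ) ≤ f x} := by
      ext x
      simp only [mem_univ, true_iff, mem_iUnion, mem_setOf_eq]
      obtain ⟨k, hk⟩ := exists_nat_ge (-(f x))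
      exact ⟨k, by linarith⟩
    have hmono : Monotone (fun k : ℕ => {x : Euc d | -(k:ℝ) ≤ f x}) := by
      intro k m hkm x hx
      simp only [mem_setOf_eq] at hx ⊢
      have : (k:ℝ) ≤ m := by exact_mod_cast hkm
      linarith
    rw [hUnion, hmono.directed_le.measure_iUnion]
    refine iSup_le fun k => ?_
    have hk : -(k:ℝ) ∈ J := by
      rw [not_bddBelow_iff] at hbdd
      obtain ⟨t, htJ, ht⟩ := hbdd (-(k:ℝ))
      exact hJup t _ htJ ht.le
    exact le_of_lt hk

/-- Vanishing at infinity (Lemma S5.5 / Theorem 3.2 of the paper):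
if `β n` are constant-speed paths of lengths `L n ∈ (0, ℓ]` with nonatomic arc-length
measures `μs n` and `R n = inf_{t ∈ [0,1]} |β n t|₂ → ∞`, then the curve depths
`∫ D(x | Q, μs n) dμs n (x)` tend to `0`. -/
theorem curveDepth_vanishing_at_infinity
    (d : ℕ) (hd : 1 ≤ d)
    (Q : Measure (Euc d)) [IsProbabilityMeasure Q]
    (ℓ : ℝ) (hℓ : 0 < ℓ)
    (β : ℕ → ℝ → Euc d) (L : ℕ → ℝ) (μs : ℕ → Measure (Euc d))
    (hcont : ∀ n, ContinuousOn (β n) (Icc 0 1))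
    (hLpos : ∀ n, 0 < L n) (hLle : ∀ n, L n ≤ ℓ)
    (hspeed : ∀ n, ∀ t ∈ Icc (0:ℝ) 1,
      eVariationOn (β n) (Icc 0 t) = ENNReal.ofReal (t * L n))
    (hmap : ∀ n, μs n = (volume.restrict (Icc (0:ℝ) 1)).map (β n))
    (hatom : ∀ n x, μs n {x} = 0)
    (hR : Tendsto (fun n => ⨅ t : Icc (0:ℝ) 1, ‖β n t‖) atTop atTop) :
    Tendsto (fun n => curveDepth Q (μs n)) atTop (nhds 0) := by
  have hae : ∀ n, AEMeasurable (β n) (volume.restrict (Icc (0:ℝ) 1)) := fun n =>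
    (hcont n).aemeasurable measurableSet_Icc
  have happly : ∀ n (s : Set (Euc d)), MeasurableSet s →
      μs n s = volume (β n ⁻¹' s ∩ Icc 0 1) := by
    intro n s hs
    rw [hmap n, Measure.map_apply_of_aemeasurable (hae n) hs,
      Measure.restrict_apply' measurableSet_Icc]
  have hprob : ∀ n, IsProbabilityMeasure (μs n) := by
    intro n
    constructor
    rw [happly n univ MeasurableSet.univ]
    simp [Real.volume_Icc]
  rw [ENNReal.tendsto_atTop_zero]
  intro ε hε
  set δ : ℝ≥0∞ := min (ε/4) 2⁻¹ with hδdef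
  have hδ0 : 0 < δ := lt_min (ENNReal.div_pos hε.ne' (by norm_num)) (by norm_num)
  have hδ2 : δ ≤ 2⁻¹ := min_le_right _ _
  have hδ4 : δ ≤ ε/4 := min_le_left _ _
  set η : ℝ≥0∞ := δ * (ε/2) with hηdef
  have hη0 : 0 < η := ENNReal.mul_pos hδ0.ne' (ENNReal.div_pos hε.ne' (by norm_num)).ne'
  -- choose a radius k with small Q-tail
  have htail : Tendsto (fun k : ℕ => Q {y : Euc d | (k:ℝ) ≤ ‖y‖}) atTop (nhds 0) := by
    have h1 : (⋂ k : ℕ, {y : Euc d | (k:ℝ) ≤ ‖y‖}) = ∅ := by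
      ext y
      simp only [mem_iInter, mem_setOf_eq, mem_empty_iff_false, iff_false, not_forall, not_le]
      obtain ⟨k, hk⟩ := exists_nat_gt ‖y‖
      exact ⟨k, hk⟩
    have h2 := tendsto_measure_iInter_atTop (μ := Q) (s := fun k : ℕ => {y : Euc d | (k:ℝ) ≤ ‖y‖})
      (fun k => ((isClosed_le continuous_const continuous_norm).measurableSet).nullMeasurableSet)
      (by
        intro p q hpq y hy
        simp only [mem_setOf_eq] at hy ⊢
        have : (p:ℝ) ≤ q := by exact_mod_cast hpq
        linarith)
      ⟨0, measure_ne_top Q _⟩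
    rw [h1, measure_empty] at h2
    exact h2
  obtain ⟨k, hk⟩ := (htail.eventually_lt_const hη0).exists
  obtain ⟨N, hN⟩ := (tendsto_atTop.mp hR ((k:ℝ) + ℓ)).exists_forall_of_atTop
  refine ⟨N, fun n hn => ?_⟩
  haveI := hprob n
  -- the base point is far away
  have hβ0 : (k:ℝ) + ℓ ≤ ‖β n 0‖ := by
    have hbb : BddBelow (range fun t : Icc (0:ℝ) 1 => ‖β n t‖) := by
      refine ⟨0, ?_⟩
      rintro v ⟨t, rfl⟩
      exact norm_nonneg _
    have h2 : (⨅ t : Icc (0:ℝ) 1, ‖β n t‖) ≤ ‖β n ((⟨0, by norm_num⟩ : Icc (0:ℝ) 1) : ℝ)‖ :=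
      ciInf_le hbb _
    exact le_trans (hN n hn) h2
  have h0pos : (0:ℝ) < ‖β n 0‖ := lt_of_lt_of_le (by positivity) hβ0
  have h0ne : β n 0 ≠ 0 := fun h => by simp [h] at h0pos
  set u : Euc d := (‖β n 0‖⁻¹ : ℝ) • β n 0 with hudef
  have hu : ‖u‖ = 1 := norm_smul_inv_norm h0ne
  set K : Set (Euc d) := β n '' Icc 0 1 with hKdef
  have hKcpt : IsCompact K := isCompact_Icc.image_of_continuousOn (hcont n)
  have hKmeas : MeasurableSet K := hKcpt.isClosed.measurableSet
  have hKae : ∀ᵐ x ∂ μs n, x ∈ K := by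
    rw [ae_iff]
    have he : {x | ¬ x ∈ K} = Kᶜ := rfl
    rw [he, happly n Kᶜ hKmeas.compl]
    have h3 : β n ⁻¹' Kᶜ ∩ Icc 0 1 = ∅ := by
      ext t
      simp only [mem_inter_iff, mem_preimage, mem_compl_iff, mem_empty_iff_false, iff_false,
        not_and]
      intro h ht
      exact h (mem_image_of_mem _ ht)
    rw [h3, measure_empty]
  -- every curve point has inner product with u at least k
  have hproj : ∀ x ∈ K, (k:ℝ) ≤ ⟪x, u⟫ := by
    rintro x ⟨t, ht, rfl⟩
    have hinner0 : ⟪β n 0, u⟫ = ‖β n 0‖ := by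
      rw [hudef, real_inner_smul_right, real_inner_self_eq_norm_mul_norm]
      field_simp
    have hdist : ‖β n t - β n 0‖ ≤ ℓ := by
      have h1 : edist (β n 0) (β n t) ≤ eVariationOn (β n) (Icc 0 t) :=
        eVariationOn.edist_le (β n) ⟨le_refl (0:ℝ), ht.1⟩ ⟨ht.1, le_refl t⟩
      rw [hspeed n t ht, edist_dist] at h1
      have h2 : dist (β n 0) (β n t) ≤ t * L n := by
        have hnn : (0:ℝ) ≤ t * L n := mul_nonneg ht.1 (hLpos n).le
        exact (ENNReal.ofReal_le_ofReal_iff hnn).mp h1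
      have h3 : t * L n ≤ ℓ := by
        have h4 := hLpos n
        have h5 := hLle n
        nlinarith [ht.1, ht.2]
      rw [dist_eq_norm, norm_sub_rev] at h2
      linarith
    have hCS : |⟪β n t - β n 0, u⟫| ≤ ‖β n t - β n 0‖ := by
      calc |⟪β n t - β n 0, u⟫| ≤ ‖β n t - β n 0‖ * ‖u‖ := abs_real_inner_le_norm _ _
        _ = ‖β n t - β n 0‖ := by rw [hu, mul_one]
    have hsplit : ⟪β n t, u⟫ = ⟪β n 0, u⟫ + ⟪β n t - β n 0, u⟫ := by
      rw [inner_sub_left]; ring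
    have habs := abs_le.mp hCS
    rw [hsplit, hinner0]
    linarith [habs.1]
  -- numerator bound
  have hQ : ∀ x ∈ K, Q (halfSpace u x) ≤ η := by
    intro x hx
    refine le_trans (measure_mono ?_) hk.le
    intro y hy
    have h1 : (k:ℝ) ≤ ⟪y, u⟫ := le_trans (hproj x hx) hy
    have h2 : ⟪y, u⟫ ≤ ‖y‖ := by
      calc ⟪y, u⟫ ≤ ‖y‖ * ‖u‖ := real_inner_le_norm _ _
        _ = ‖y‖ := by rw [hu, mul_one]
    exact le_trans h1 h2
  obtain ⟨U, hUmeas, hTU, hUδ⟩ := tail_superset (μs n) u δ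
  -- pointwise bound
  have hpt : ∀ᵐ x ∂ μs n, pointDepth Q (μs n) x ≤ ε/2 + U.indicator (fun _ => 2) x := by
    filter_upwards [hKae] with x hx
    by_cases hxT : μs n (halfSpace u x) < δ
    · have hxU : x ∈ U := hTU hxT
      rw [indicator_of_mem hxU]
      have hmuneg : ‖-u‖ = 1 := by rw [norm_neg, hu]
      have hsub : (halfSpace u x)ᶜ ⊆ halfSpace (-u) x := by
        intro y hy
        simp only [halfSpace, mem_compl_iff, mem_setOf_eq, not_le, inner_neg_right] at hy ⊢
        linarith
      have hμ' : (2⁻¹ : ℝ≥0∞) ≤ μs n (halfSpace (-u) x) := by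
        have h1 : μs n ((halfSpace u x)ᶜ) = 1 - μs n (halfSpace u x) :=
          prob_compl_eq_one_sub (halfSpace_measurableSet u x)
        have h2 : (2⁻¹:ℝ≥0∞) ≤ 1 - μs n (halfSpace u x) := by
          calc (2⁻¹:ℝ≥0∞) = 1 - 2⁻¹ := ENNReal.one_sub_inv_two.symm
            _ ≤ 1 - μs n (halfSpace u x) := tsub_le_tsub_left (le_trans hxT.le hδ2) 1
        rw [← h1] at h2
        exact le_trans h2 (measure_mono hsub)
      have hb : pointDepth Q (μs n) x ≤ (2:ℝ≥0∞) := by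
        calc pointDepth Q (μs n) x
            ≤ Q (halfSpace (-u) x) / μs n (halfSpace (-u) x) :=
              pointDepth_le Q (μs n) x (-u) hmuneg
          _ ≤ 1 / 2⁻¹ := ENNReal.div_le_div prob_le_one hμ'
          _ = 2 := by rw [one_div, inv_inv]
      exact le_trans hb le_add_self
    · push_neg at hxT
      have hb : pointDepth Q (μs n) x ≤ ε/2 := by
        calc pointDepth Q (μs n) x
            ≤ Q (halfSpace u x) / μs n (halfSpace u x) := pointDepth_le Q (μs n) x u hu
          _ ≤ η / δ := ENNReal.div_le_div (hQ x hx) hxT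
          _ ≤ ε/2 := ENNReal.div_le_of_le_mul (by rw [hηdef, mul_comm])
      exact le_trans hb le_self_add
  -- integrate
  calc curveDepth Q (μs n)
      ≤ ∫⁻ x, (ε/2 + U.indicator (fun _ => 2) x) ∂ μs n := lintegral_mono_ae hpt
    _ = ε/2 + 2 * μs n U := by
        rw [lintegral_add_right _ (measurable_const.indicator hUmeas), lintegral_const,
          lintegral_indicator hUmeas _, setLIntegral_const, measure_univ, mul_one]
    _ ≤ ε/2 + ε/2 := by
        gcongr
        have h1 : (2:ℝ≥0∞) * μs n U ≤ 2 * δ := by gcongr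
        refine le_trans h1 ?_
        rw [ENNReal.le_div_iff_mul_le (Or.inl (by norm_num)) (Or.inl (by norm_num))]
        have h2 : (2:ℝ≥0∞) * δ * 2 = δ * 4 := by ring
        rw [h2]
        rw [← ENNReal.le_div_iff_mul_le (Or.inl (by norm_num)) (Or.inl (by norm_num))]
        exact hδ4
    _ = ε := ENNReal.add_halves ε
end
end

section
/- Let d ≥ 1 and let μ and Q be nonatomic Borel probability measures on ℝ^d. Then for every x ∈ ℝ^d there exists a unit vector u ∈ ℝ^d such that the closed halfspace H = H_{u,x}, whose boundary hyperplane contains x, satisfies Q(H) = 0 or Q(H) ≤ μ(H); equivalently, Q(H)/μ(H) ≤ 1 under the conventions 0/0 = 0 and a/0 = +∞ for a > 0. In particular the point curve depth satisfies D(x|Q,μ) ≤ 1 for every x. (Lemma S3.1 / 'depth bounded' lemma of the paper.) -/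
open MeasureTheory Set Filter
open scoped ENNReal RealInnerProductSpace

noncomputable section

/-!
A hyperplane `P` through `x` that is null for `Q + μ` splits the space into two closed
halfspaces `H`, `H'` with `Q H + Q H' = 1 = μ H + μ H'`, so `Q ≤ μ` on one of them.
Such a hyperplane is built one dimension at a time: given a null flat `x + V` of
codimension at least two, the flats `x + (V ⊔ ℝ (w + t w'))`, `t ∈ ℝ`, pairwise meet in
`x + V`, so by s-finiteness all but countably many of them are null.
-/

lemma MeasureTheory.exists_measure_eq_zero_of_pairwise_aedisjoint {α ι : Type*}
    [MeasurableSpace α] [Uncountable ι] {μ : Measure α} [SFinite μ] {s : ι → Set α}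
    (hs : ∀ i, NullMeasurableSet (s i) μ) (hd : Pairwise fun i j => AEDisjoint μ (s i) (s j)) :
    ∃ i, μ (s i) = 0 := by
  by_contra! h
  exact not_countable_univ <| (Measure.countable_meas_pos_of_disjoint_iUnion₀ hs hd).mono
    fun i _ => pos_iff_ne_zero.2 (h i)

open Module Submodule

section NullFlat

variable {E : Type*} [NormedAddCommGroup E] [InnerProductSpace ℝ E] [FiniteDimensional ℝ E]

lemma exists_pairwise_sup_span_singleton_inf_le (V : Submodule ℝ E)
    (hV : finrank ℝ V + 2 ≤ finrank ℝ E) :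
    ∃ z : ℝ → E, (∀ t, z t ∉ V) ∧
      Pairwise fun s t => (V ⊔ span ℝ {z s}) ⊓ (V ⊔ span ℝ {z t}) ≤ V := by
  have h2 : 2 ≤ finrank ℝ Vᗮ := by
    have := V.finrank_add_finrank_orthogonal
    omega
  let b := stdOrthonormalBasis ℝ Vᗮ
  have hb : Orthonormal ℝ (Vᗮ.subtypeₗᵢ ∘ b) := b.orthonormal.comp_linearIsometry _
  let w : E := b ⟨0, by omega⟩
  let w' : E := b ⟨1, by omega⟩
  have hw : ⟪w, w⟫ = 1 := by
    rw [real_inner_self_eq_norm_sq, show ‖w‖ = 1 from hb.1 _, one_pow]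
  have hw' : ⟪w', w'⟫ = 1 := by
    rw [real_inner_self_eq_norm_sq, show ‖w'‖ = 1 from hb.1 _, one_pow]
  have hww' : ⟪w, w'⟫ = 0 := hb.2 (by simp)
  have coord : ∀ v ∈ V, ∀ a t : ℝ,
      ⟪v + a • (w + t • w'), w⟫ = a ∧ ⟪v + a • (w + t • w'), w'⟫ = a * t := by
    intro v hv a t
    have hvw : ⟪v, w⟫ = 0 := (b _).2 v hv
    have hvw' : ⟪v, w'⟫ = 0 := (b _).2 v hv
    simp only [inner_add_left, real_inner_smul_left, hvw, hvw', hw, hw', hww',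
      real_inner_comm w w']
    constructor <;> ring
  refine ⟨fun t => w + t • w', fun t ht => ?_, fun s t hst y ⟨hys, hyt⟩ => ?_⟩
  · have := (coord _ ht (-1) t).1
    rw [neg_one_smul, add_neg_cancel, inner_zero_left] at this
    norm_num at this
  obtain ⟨v, hv, _, hp, rfl⟩ := mem_sup.mp hys
  obtain ⟨a, rfl⟩ := mem_span_singleton.mp hp
  obtain ⟨v', hv', _, hp', hy⟩ := mem_sup.mp hyt
  obtain ⟨a', rfl⟩ := mem_span_singleton.mp hp'
  beta_reduce at hy
  obtain ⟨h1, h2⟩ := coord v hv a s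
  obtain ⟨h1', h2'⟩ := coord v' hv' a' t
  rw [hy, h1] at h1'
  rw [hy, h2] at h2'
  have ha : a = 0 := by
    have : a * (s - t) = 0 := by linear_combination h2' - t * h1'
    exact (mul_eq_zero.mp this).resolve_right (sub_ne_zero.mpr hst)
  simpa [ha] using hv

variable [MeasurableSpace E] [BorelSpace E]

lemma measurableSet_preimage_sub_submodule (x : E) (V : Submodule ℝ E) :
    MeasurableSet ((· - x) ⁻¹' (V : Set E)) :=
  (V.closed_of_finiteDimensional.preimage (continuous_sub_right x)).measurableSet

lemma exists_finrank_succ_measure_flat_eq_zero (ρ : Measure E) [SFinite ρ] (x : E)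
    {V : Submodule ℝ E} (hV : finrank ℝ V + 2 ≤ finrank ℝ E)
    (hρV : ρ ((· - x) ⁻¹' (V : Set E)) = 0) :
    ∃ W : Submodule ℝ E,
      finrank ℝ W = finrank ℝ V + 1 ∧ ρ ((· - x) ⁻¹' (W : Set E)) = 0 := by
  obtain ⟨z, hzV, hz⟩ := exists_pairwise_sup_span_singleton_inf_le V hV
  obtain ⟨t, ht⟩ := exists_measure_eq_zero_of_pairwise_aedisjoint
    (s := fun t => (· - x) ⁻¹' ((V ⊔ span ℝ {z t} : Submodule ℝ E) : Set E))
    (fun t => (measurableSet_preimage_sub_submodule x _).nullMeasurableSet)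
    fun s t hst => measure_mono_null (by
      rw [← preimage_inter, ← coe_inf]
      exact preimage_mono (hz hst)) hρV
  exact ⟨_, finrank_sup_span_singleton (hzV t), ht⟩

lemma exists_finrank_eq_measure_flat_eq_zero (ρ : Measure E) [SFinite ρ] (x : E)
    (hx : ρ {x} = 0) {j : ℕ} (hj : j < finrank ℝ E) :
    ∃ V : Submodule ℝ E, finrank ℝ V = j ∧ ρ ((· - x) ⁻¹' (V : Set E)) = 0 := by
  induction j with
  | zero =>
    refine ⟨⊥, finrank_bot ℝ E, ?_⟩
    convert hx using 2
    ext y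
    simp [sub_eq_zero]
  | succ j ih =>
    obtain ⟨V, rfl, hρV⟩ := ih (by omega)
    exact exists_finrank_succ_measure_flat_eq_zero ρ x hj hρV

lemma exists_norm_eq_one_measure_hyperplane_eq_zero (ρ : Measure E) [SFinite ρ] (x : E)
    (hx : ρ {x} = 0) (hE : 0 < finrank ℝ E) :
    ∃ u : E, ‖u‖ = 1 ∧ ρ {y | ⟪y, u⟫ = ⟪x, u⟫} = 0 := by
  obtain ⟨V, hV, hρV⟩ :=
    exists_finrank_eq_measure_flat_eq_zero ρ x hx (j := finrank ℝ E - 1) (by omega)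
  have hVperp : Vᗮ ≠ ⊥ := fun h => by
    have := V.finrank_add_finrank_orthogonal
    rw [h, finrank_bot] at this
    omega
  obtain ⟨v, hv, hv0⟩ := exists_mem_ne_zero_of_ne_bot hVperp
  set u : E := ‖v‖⁻¹ • v
  have hu0 : u ≠ 0 := smul_ne_zero (inv_ne_zero (norm_ne_zero_iff.mpr hv0)) hv0
  have hVu : (ℝ ∙ u)ᗮ = V := by
    refine (eq_of_le_of_finrank_eq ?_ ?_).symm
    · refine le_orthogonal_orthogonal V |>.trans (orthogonal_le ?_)
      exact (span_singleton_le_iff_mem _ _).mpr (Vᗮ.smul_mem _ hv)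
    · have := (ℝ ∙ u).finrank_add_finrank_orthogonal
      rw [finrank_span_singleton hu0] at this
      omega
  refine ⟨u, norm_smul_inv_norm hv0, measure_mono_null (fun y hy => ?_) hρV⟩
  rw [mem_preimage, SetLike.mem_coe, ← hVu, mem_orthogonal_singleton_iff_inner_right,
    inner_sub_right, real_inner_comm, real_inner_comm x, mem_ofPred_eq.mp hy, sub_self]

end NullFlat

lemma measure_halfSpace_add_measure_halfSpace_neg {d : ℕ} (m : Measure (Euc d))
    (u x : Euc d) :
    m (halfSpace u x) + m (halfSpace (-u) x) = m univ + m {y | ⟪y, u⟫ = ⟪x, u⟫} := by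
  have hunion : halfSpace u x ∪ halfSpace (-u) x = univ :=
    eq_univ_of_forall fun y => by
      simp only [halfSpace, mem_union, mem_ofPred_eq, inner_neg_right, neg_le_neg_iff]
      exact le_total _ _
  have hinter : halfSpace u x ∩ halfSpace (-u) x = {y | ⟪y, u⟫ = ⟪x, u⟫} := by
    ext y
    simp only [halfSpace, mem_inter_iff, mem_ofPred_eq, inner_neg_right, neg_le_neg_iff]
    exact ⟨fun h => le_antisymm h.2 h.1, fun h => ⟨h.ge, h.le⟩⟩
  have hmeas : MeasurableSet (halfSpace (-u) x) :=
    measurableSet_le measurable_const (measurable_id.inner measurable_const)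
  rw [← measure_union_add_inter _ hmeas, hunion, hinter]

/-- Lemma S3.1 of the paper ('depth bounded'): for nonatomic probability measures `Q`
and `μ` on `ℝ^d` and any `x`, there is a closed halfspace `H` whose boundary hyperplane
contains `x` with `Q(H) = 0` or `Q(H) ≤ μ(H)`; equivalently `Q(H)/μ(H) ≤ 1` under the
conventions `0/0 = 0`, `a/0 = ∞`.  In particular `D(x|Q,μ) ≤ 1`. -/
theorem exists_halfspace_ratio_le_one
    (d : ℕ) (hd : 1 ≤ d)
    (Q μ : Measure (Euc d)) [IsProbabilityMeasure Q] [IsProbabilityMeasure μ]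
    (hQatom : ∀ x, Q {x} = 0) (hμatom : ∀ x, μ {x} = 0) :
    ∀ x : Euc d,
      (∃ u : Euc d, ‖u‖ = 1 ∧
        (Q (halfSpace u x) = 0 ∨ Q (halfSpace u x) ≤ μ (halfSpace u x)) ∧
        Q (halfSpace u x) / μ (halfSpace u x) ≤ 1) ∧
      pointDepth Q μ x ≤ 1 := by
  intro x
  obtain ⟨u, hu, hnull⟩ := exists_norm_eq_one_measure_hyperplane_eq_zero (Q + μ) x
    (by simp [hQatom x, hμatom x]) (by simp; omega)
  rw [Measure.add_apply, add_eq_zero] at hnull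
  have hQ := measure_halfSpace_add_measure_halfSpace_neg Q u x
  have hμ := measure_halfSpace_add_measure_halfSpace_neg μ u x
  rw [hnull.1, measure_univ] at hQ
  rw [hnull.2, measure_univ, ← hQ] at hμ
  obtain ⟨v, hv, hle⟩ : ∃ v : Euc d, ‖v‖ = 1 ∧ Q (halfSpace v x) ≤ μ (halfSpace v x) := by
    by_contra! h
    exact (ENNReal.add_lt_add (h u hu) (h (-u) (by rwa [norm_neg]))).ne hμ
  have hdiv : Q (halfSpace v x) / μ (halfSpace v x) ≤ 1 :=
    ENNReal.div_le_of_le_mul (by rwa [one_mul])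
  exact ⟨⟨v, hv, .inr hle, hdiv⟩, (iInf₂_le v hv).trans hdiv⟩
end
end

section
/- Let d ≥ 1 and let β₁, β₂ : [0,1] → ℝ^d be continuous paths that are never-locally-constant, i.e., there is no nonempty open subinterval (a,b) ⊂ [0,1] on whose closure the path is constant. Then inf{‖β₁∘γ₁ − β₂∘γ₂‖_∞ : γ₁, γ₂ ∈ Γ} = inf{‖β₁∘ψ₁ − β₂∘ψ₂‖_∞ : ψ₁, ψ₂ increasing homeomorphisms of [0,1] onto itself}; that is, in computing the Fréchet distance between the curves of β₁ and β₂ one may restrict the reparametrizations to increasing homeomorphisms. (Lemma S2.2 of the paper.) -/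
open MeasureTheory Set Filter
open scoped ENNReal unitInterval

noncomputable section

/-- The set `Γ` of nondecreasing continuous reparametrizations of `[0,1]`
fixing the endpoints. -/
def Gamma : Set C(unitInterval, unitInterval) :=
  {γ | Monotone γ ∧ γ 0 = 0 ∧ γ 1 = 1}

/-- A continuous path is never-locally-constant if it is constant on no nonempty
subinterval `[a,b]`, `a < b`. -/
def NeverLocallyConstant {d : ℕ} (β : C(unitInterval, Euc d)) : Prop :=
  ∀ a b : unitInterval, a < b → ∃ t ∈ Set.Icc a b, β t ≠ β a

/-- Any `γ ∈ Γ` can be approximated by a strictly monotone homeomorphism of the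
unit interval: mix with the identity. -/
lemma exists_homeo_near (γ : C(unitInterval, unitInterval)) (hγ : γ ∈ Gamma)
    {θ : ℝ} (hθ0 : 0 < θ) (hθ1 : θ ≤ 1) :
    ∃ ψ : unitInterval ≃ₜ unitInterval, StrictMono ψ ∧
      ∀ t : unitInterval, dist (ψ t) (γ t) ≤ θ := by
  obtain ⟨hmono, h0, h1⟩ := hγ
  have mem : ∀ t : unitInterval, (1 - θ) * (γ t : ℝ) + θ * (t : ℝ) ∈ unitInterval := by
    intro t
    have ht := t.2
    have hg := (γ t).2
    simp only [Set.mem_Icc] at ht hg ⊢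
    constructor
    · nlinarith [ht.1, hg.1]
    · nlinarith [ht.2, hg.2]
  set f : unitInterval → unitInterval := fun t => ⟨(1 - θ) * (γ t : ℝ) + θ * (t : ℝ), mem t⟩
    with hf
  have hcont : Continuous f := by
    apply Continuous.subtype_mk
    fun_prop
  have hsm : StrictMono f := by
    intro s t hst
    rw [← Subtype.coe_lt_coe]
    have h1' : (γ s : ℝ) ≤ (γ t : ℝ) := Subtype.coe_le_coe.2 (hmono hst.le)
    have h2' : (s : ℝ) < (t : ℝ) := Subtype.coe_lt_coe.2 hst
    show (1 - θ) * (γ s : ℝ) + θ * (s : ℝ) < (1 - θ) * (γ t : ℝ) + θ * (t : ℝ)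
    nlinarith
  have hf0 : f 0 = 0 := by
    apply Subtype.ext
    show (1 - θ) * (γ 0 : ℝ) + θ * ((0 : unitInterval) : ℝ) = 0
    rw [h0]
    norm_num
  have hf1 : f 1 = 1 := by
    apply Subtype.ext
    show (1 - θ) * (γ 1 : ℝ) + θ * ((1 : unitInterval) : ℝ) = 1
    rw [h1]
    norm_num
  have hsurj : Function.Surjective f := by
    intro y
    have hsub : Set.Icc (f 0) (f 1) ⊆ Set.range f := intermediate_value_univ 0 1 hcont
    apply hsub
    rw [hf0, hf1]
    constructor
    · exact Subtype.coe_le_coe.1 y.2.1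
    · exact Subtype.coe_le_coe.1 y.2.2
  refine ⟨(StrictMono.orderIsoOfSurjective f hsm hsurj).toHomeomorph, ?_, ?_⟩
  · intro s t hst
    exact hsm hst
  · intro t
    show dist (f t) (γ t) ≤ θ
    rw [Subtype.dist_eq, Real.dist_eq]
    have : ((1 - θ) * (γ t : ℝ) + θ * (t : ℝ)) - (γ t : ℝ) = θ * ((t : ℝ) - (γ t : ℝ)) := by
      ring
    show |((1 - θ) * (γ t : ℝ) + θ * (t : ℝ)) - (γ t : ℝ)| ≤ θ
    rw [this, abs_mul, abs_of_pos hθ0]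
    have ht := t.2
    have hg := (γ t).2
    simp only [Set.mem_Icc] at ht hg
    have : |(t : ℝ) - (γ t : ℝ)| ≤ 1 := by
      rw [abs_le]; constructor <;> linarith [ht.1, ht.2, hg.1, hg.2]
    nlinarith

/-- Lemma S2.2 of the paper: for never-locally-constant paths, the Fréchet distance
computed over reparametrizations in `Γ` coincides with the one computed over
increasing homeomorphisms of `[0,1]`. -/
theorem frechet_inf_eq_inf_over_homeomorphisms
    (d : ℕ) (hd : 1 ≤ d) (β₁ β₂ : C(unitInterval, Euc d))
    (h₁ : NeverLocallyConstant β₁) (h₂ : NeverLocallyConstant β₂) :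
    sInf {s : ℝ | ∃ γ₁ ∈ Gamma, ∃ γ₂ ∈ Gamma, s = ‖β₁.comp γ₁ - β₂.comp γ₂‖} =
    sInf {s : ℝ | ∃ ψ₁ ψ₂ : unitInterval ≃ₜ unitInterval,
      StrictMono ψ₁ ∧ StrictMono ψ₂ ∧
      s = ‖β₁.comp (ψ₁ : C(unitInterval, unitInterval)) - β₂.comp (ψ₂ : C(unitInterval, unitInterval))‖} := by
  set A := {s : ℝ | ∃ γ₁ ∈ Gamma, ∃ γ₂ ∈ Gamma, s = ‖β₁.comp γ₁ - β₂.comp γ₂‖} with hA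
  set B := {s : ℝ | ∃ ψ₁ ψ₂ : unitInterval ≃ₜ unitInterval,
      StrictMono ψ₁ ∧ StrictMono ψ₂ ∧
      s = ‖β₁.comp (ψ₁ : C(unitInterval, unitInterval)) - β₂.comp (ψ₂ : C(unitInterval, unitInterval))‖}
    with hB
  -- Every ψ in the homeomorphism set gives an element of Γ.
  have hBA : B ⊆ A := by
    rintro s ⟨ψ₁, ψ₂, hψ₁, hψ₂, rfl⟩
    have key : ∀ (ψ : unitInterval ≃ₜ unitInterval), StrictMono ψ →
        (ψ : C(unitInterval, unitInterval)) ∈ Gamma := by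
      intro ψ hψ
      refine ⟨hψ.monotone, ?_, ?_⟩
      · obtain ⟨x, hx⟩ := ψ.surjective 0
        have h0x : ψ 0 ≤ ψ x := hψ.monotone x.2.1
        rw [hx] at h0x
        exact le_antisymm h0x (ψ 0).2.1
      · obtain ⟨x, hx⟩ := ψ.surjective 1
        have h1x : ψ x ≤ ψ 1 := hψ.monotone x.2.2
        rw [hx] at h1x
        exact le_antisymm (ψ 1).2.2 h1x
    exact ⟨_, key ψ₁ hψ₁, _, key ψ₂ hψ₂, rfl⟩
  have hAbdd : BddBelow A := ⟨0, by rintro s ⟨γ₁, _, γ₂, _, rfl⟩; exact norm_nonneg _⟩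
  have hBbdd : BddBelow B := hAbdd.mono hBA
  have hBne : B.Nonempty := by
    refine ⟨_, Homeomorph.refl unitInterval, Homeomorph.refl unitInterval,
      strictMono_id, strictMono_id, rfl⟩
  have hAne : A.Nonempty := hBne.mono hBA
  apply le_antisymm
  · exact csInf_le_csInf hAbdd hBne hBA
  · -- sInf B ≤ sInf A
    apply le_csInf hAne
    rintro a ⟨γ₁, hγ₁, γ₂, hγ₂, rfl⟩
    apply le_of_forall_pos_le_add
    intro ε hε
    -- uniform continuity of β₁ and β₂
    have hu₁ : UniformContinuous β₁ := CompactSpace.uniformContinuous_of_continuous β₁.continuous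
    have hu₂ : UniformContinuous β₂ := CompactSpace.uniformContinuous_of_continuous β₂.continuous
    rw [Metric.uniformContinuous_iff] at hu₁ hu₂
    obtain ⟨δ₁, hδ₁, hb₁⟩ := hu₁ (ε / 2) (by linarith)
    obtain ⟨δ₂, hδ₂, hb₂⟩ := hu₂ (ε / 2) (by linarith)
    set θ := min (min δ₁ δ₂ / 2) 1 with hθ
    have hθ0 : 0 < θ := lt_min (by positivity) one_pos
    have hθ1 : θ ≤ 1 := min_le_right _ _
    have hθδ₁ : θ < δ₁ := lt_of_le_of_lt (min_le_left _ _)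
      (by have := min_le_left δ₁ δ₂; linarith)
    have hθδ₂ : θ < δ₂ := lt_of_le_of_lt (min_le_left _ _)
      (by have := min_le_right δ₁ δ₂; linarith)
    obtain ⟨ψ₁, hψ₁m, hψ₁d⟩ := exists_homeo_near γ₁ hγ₁ hθ0 hθ1
    obtain ⟨ψ₂, hψ₂m, hψ₂d⟩ := exists_homeo_near γ₂ hγ₂ hθ0 hθ1
    have hmem : ‖β₁.comp (ψ₁ : C(unitInterval, unitInterval)) -
        β₂.comp (ψ₂ : C(unitInterval, unitInterval))‖ ∈ B :=
      ⟨ψ₁, ψ₂, hψ₁m, hψ₂m, rfl⟩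
    refine le_trans (csInf_le hBbdd hmem) ?_
    have hC : (0 : ℝ) ≤ ‖β₁.comp γ₁ - β₂.comp γ₂‖ + ε := by positivity
    rw [ContinuousMap.norm_le _ hC]
    intro t
    simp only [ContinuousMap.sub_apply, ContinuousMap.comp_apply]
    rw [← dist_eq_norm]
    calc dist (β₁ (ψ₁ t)) (β₂ (ψ₂ t))
        ≤ dist (β₁ (ψ₁ t)) (β₁ (γ₁ t)) + dist (β₁ (γ₁ t)) (β₂ (γ₂ t)) +
          dist (β₂ (γ₂ t)) (β₂ (ψ₂ t)) := dist_triangle4 _ _ _ _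
      _ ≤ ε / 2 + ‖β₁.comp γ₁ - β₂.comp γ₂‖ + ε / 2 := by
          gcongr
          · exact le_of_lt (hb₁ (lt_of_le_of_lt (hψ₁d t) hθδ₁))
          · rw [dist_eq_norm]
            have := (β₁.comp γ₁ - β₂.comp γ₂).norm_coe_le_norm t
            simpa using this
          · exact le_of_lt (hb₂ (lt_of_le_of_lt (dist_comm (γ₂ t) (ψ₂ t) ▸ hψ₂d t) hθδ₂))
      _ = ‖β₁.comp γ₁ - β₂.comp γ₂‖ + ε := by ring
end
end

section
/- Let d ≥ 1 and fix u ∈ [0,1]. The map β ↦ q_β(u) is Borel measurable on the Borel subset {β ∈ C([0,1],ℝ^d) : 0 < L(β) < ∞} of C([0,1],ℝ^d) with the supremum-norm topology, where q_β(u) = inf{t ∈ [0,1] : s_β(t) ≥ u} is the generalized inverse of the normalized arc-length function s_β(t) = L(β restricted to [0,t]) / L(β). (Part 2 of Lemma S2.3 of the paper.) -/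
open MeasureTheory Set Filter
open scoped ENNReal unitInterval

noncomputable section

/-- The length (total variation on `[0,1]`) of a continuous path. -/
def curveLength {d : ℕ} (β : C(unitInterval, Euc d)) : ℝ≥0∞ :=
  eVariationOn β Set.univ

/-- The length of `β` restricted to `[0,t]`. -/
def lengthTo {d : ℕ} (β : C(unitInterval, Euc d)) (t : unitInterval) : ℝ≥0∞ :=
  eVariationOn β (Set.Icc 0 t)

/-- The normalized arc-length function `s_β(t) = L(β|_{[0,t]})/L(β)`. -/
def sFrac {d : ℕ} (β : C(unitInterval, Euc d)) (t : unitInterval) : ℝ≥0∞ :=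
  lengthTo β t / curveLength β

/-- The generalized inverse `q_β(u) = inf {t : s_β(t) ≥ u}` (computed in `ℝ`). -/
def qInf {d : ℕ} (β : C(unitInterval, Euc d)) (u : ℝ) : ℝ :=
  sInf {x : ℝ | ∃ t : unitInterval, (t : ℝ) = x ∧ ENNReal.ofReal u ≤ sFrac β t}

lemma lsc_eVariationOn (d : ℕ) (s : Set unitInterval) :
    LowerSemicontinuous fun β : C(unitInterval, Euc d) => eVariationOn β s := by
  intro f v hv
  exact eVariationOn.lowerSemicontinuous_aux
    (fun x _ => ((continuous_eval_const x).tendsto f)) hv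

lemma sFrac_mono {d : ℕ} (β : C(unitInterval, Euc d)) {t t' : unitInterval} (h : t ≤ t') :
    sFrac β t ≤ sFrac β t' :=
  ENNReal.div_le_div_right (eVariationOn.mono β (Set.Icc_subset_Icc_right h)) _

lemma Icc_zero_one_eq_univ : Set.Icc (0 : unitInterval) 1 = Set.univ := by
  ext t
  simp only [Set.mem_Icc, Set.mem_univ, iff_true]
  exact ⟨Subtype.coe_le_coe.mp t.2.1, Subtype.coe_le_coe.mp t.2.2⟩

/-- Part 2 of Lemma S2.3 of the paper: for fixed `u ∈ [0,1]`, the map `β ↦ q_β(u)` is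
Borel measurable on the set of rectifiable paths of positive length inside
`C([0,1],ℝ^d)` with the supremum-norm topology. -/
theorem qInf_measurable (d : ℕ) (hd : 1 ≤ d) (u : ℝ) (hu : u ∈ Set.Icc (0:ℝ) 1) :
    @Measurable {β : C(unitInterval, Euc d) // 0 < curveLength β ∧ curveLength β < ⊤} ℝ
      (@Subtype.instMeasurableSpace _ _ (borel C(unitInterval, Euc d))) _
      (fun β => qInf β.1 u) := by
  letI : MeasurableSpace C(unitInterval, Euc d) := borel _
  haveI : BorelSpace C(unitInterval, Euc d) := ⟨rfl⟩
  -- measurability of sFrac at each fixed time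
  have hsFrac : ∀ t : unitInterval,
      Measurable fun β : C(unitInterval, Euc d) => sFrac β t := by
    intro t
    exact ((lsc_eVariationOn d (Set.Icc 0 t)).measurable).div
      ((lsc_eVariationOn d Set.univ).measurable)
  apply measurable_of_Iio
  intro c
  have hkey : (fun β : {β : C(unitInterval, Euc d) //
        0 < curveLength β ∧ curveLength β < ⊤} => qInf β.1 u) ⁻¹' Set.Iio c =
      ⋃ (r : ℚ) (h : (r : ℝ) ∈ Set.Icc (0:ℝ) 1 ∧ (r : ℝ) < c),
        {β : {β : C(unitInterval, Euc d) // 0 < curveLength β ∧ curveLength β < ⊤} |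
          ENNReal.ofReal u ≤ sFrac β.1 ⟨(r : ℝ), h.1⟩} := by
    ext β
    simp only [Set.mem_preimage, Set.mem_Iio, Set.mem_iUnion, Set.mem_setOf_eq]
    constructor
    · intro hlt
      -- the defining set is nonempty (t = 1 works) and bounded below
      set S : Set ℝ :=
        {x : ℝ | ∃ t : unitInterval, (t : ℝ) = x ∧ ENNReal.ofReal u ≤ sFrac β.1 t} with hS
      have hone : ENNReal.ofReal u ≤ sFrac β.1 1 := by
        have : sFrac β.1 1 = 1 := by
          rw [sFrac, lengthTo, Icc_zero_one_eq_univ, ← curveLength,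
            ENNReal.div_self β.2.1.ne' β.2.2.ne]
        rw [this]
        exact ENNReal.ofReal_le_one.mpr hu.2
      have hSne : S.Nonempty := ⟨1, 1, rfl, hone⟩
      obtain ⟨x, ⟨t, rfl, ht⟩, hxc⟩ := exists_lt_of_csInf_lt hSne hlt
      -- find a rational r with t ≤ r, r ∈ [0,1], r < c
      by_cases h1 : (1 : ℝ) < c
      · refine ⟨1, ⟨by push_cast; norm_num, by push_cast; linarith⟩, ?_⟩
        refine le_trans ht (sFrac_mono β.1 ?_)
        exact Subtype.coe_le_coe.mp (by simpa using t.2.2)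
      · push_neg at h1
        obtain ⟨r, hr1, hr2⟩ := exists_rat_btwn hxc
        have hr0 : (0:ℝ) ≤ r := le_trans t.2.1 hr1.le
        have hrle1 : (r:ℝ) ≤ 1 := le_trans hr2.le h1
        refine ⟨r, ⟨⟨hr0, hrle1⟩, hr2⟩, ?_⟩
        exact le_trans ht (sFrac_mono β.1 (Subtype.coe_le_coe.mp hr1.le))
    · rintro ⟨r, ⟨hr01, hrc⟩, hr⟩
      have hmem : (r : ℝ) ∈ {x : ℝ | ∃ t : unitInterval, (t : ℝ) = x ∧
          ENNReal.ofReal u ≤ sFrac β.1 t} := ⟨⟨(r:ℝ), hr01⟩, rfl, hr⟩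
      have hbdd : BddBelow {x : ℝ | ∃ t : unitInterval, (t : ℝ) = x ∧
          ENNReal.ofReal u ≤ sFrac β.1 t} := by
        refine ⟨0, ?_⟩
        rintro x ⟨t, rfl, -⟩
        exact t.2.1
      exact lt_of_le_of_lt (csInf_le hbdd hmem) hrc
  rw [hkey]
  refine MeasurableSet.iUnion fun r => MeasurableSet.iUnion fun h => ?_
  exact measurableSet_le measurable_const
    (((hsFrac ⟨(r:ℝ), h.1⟩)).comp measurable_subtype_coe)
end
end

section
/- Let d ≥ 1 and Δ ∈ (0,1/2), and let μ̂ and Q̂ be empirical measures of finite families of points y_1,…,y_m and x_1,…,x_N in ℝ^d (i.e., μ̂ = (1/m)Σ_j δ_{y_j} and Q̂ = (1/N)Σ_i δ_{x_i}). Then the thresholded point depth x ↦ D̂(x | Q̂, μ̂, Δ) is a Borel measurable function on ℝ^d; moreover it takes only finitely many values. (Lemma S3.2 of the paper.) -/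
open MeasureTheory Set Filter
open scoped ENNReal RealInnerProductSpace Topology

noncomputable section

/-- Thresholded point depth `D̂(x | Q, μ, Δ)`: the infimum of `Q(H_{u,x})/μ(H_{u,x})`
over the unit vectors `u` with `Q(H_{u,x}) = 0` or `μ(H_{u,x}) > Δ`, with the `ℝ≥0∞`
conventions `a/0 = ∞` for `a > 0` and `0/0 = 0`. -/
def thrDepth {d : ℕ} (Q μ : Measure (Euc d)) (Δ : ℝ) (x : Euc d) : ℝ≥0∞ :=
  ⨅ (u : Euc d) (_ : ‖u‖ = 1 ∧
      (Q (halfSpace u x) = 0 ∨ ENNReal.ofReal Δ < μ (halfSpace u x))),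
    Q (halfSpace u x) / μ (halfSpace u x)

/-- The empirical measure `(1/k) Σ_j δ_{z j}` of a finite family of points. -/
def empMeasure {d k : ℕ} (z : Fin k → Euc d) : Measure (Euc d) :=
  (k : ℝ≥0∞)⁻¹ • ∑ j, Measure.dirac (z j)

lemma isClosed_halfSpace {d : ℕ} (u x : Euc d) : IsClosed (halfSpace u x) :=
  isClosed_le continuous_const (continuous_id.inner continuous_const)

lemma mem_halfSpace {d : ℕ} {u z p : Euc d} : p ∈ halfSpace u z ↔ ⟪z, u⟫ ≤ ⟪p, u⟫ := Iff.rfl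

open Classical in
lemma empMeasure_apply {d k : ℕ} (z : Fin k → Euc d) {s : Set (Euc d)}
    (hs : MeasurableSet s) :
    empMeasure z s = (k : ℝ≥0∞)⁻¹ * (Finset.univ.filter fun j => z j ∈ s).card := by
  rw [empMeasure, Measure.smul_apply, Measure.finset_sum_apply, smul_eq_mul]
  congr 1
  rw [Finset.card_filter]
  push_cast
  refine Finset.sum_congr rfl fun j _ => ?_
  rw [Measure.dirac_apply' _ hs]
  simp [Set.indicator_apply]

open Classical in
def memSet {d k : ℕ} (p : Fin k → Euc d) (u z : Euc d) : Finset (Fin k) :=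
  Finset.univ.filter fun i => p i ∈ halfSpace u z

open Classical in
lemma empMeasure_apply' {d k : ℕ} (p : Fin k → Euc d) (u z : Euc d) :
    empMeasure p (halfSpace u z) = (k : ℝ≥0∞)⁻¹ * (memSet p u z).card :=
  empMeasure_apply p (isClosed_halfSpace u z).measurableSet

def goodSet {d N m : ℕ} (x : Fin N → Euc d) (y : Fin m → Euc d)
    (S : Finset (Fin N)) (T : Finset (Fin m)) : Set (Euc d) :=
  {z | ∃ u : Euc d, ‖u‖ = 1 ∧ memSet x u z = S ∧ memSet y u z = T}

def approxSet {d N m : ℕ} (x : Fin N → Euc d) (y : Fin m → Euc d)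
    (S : Finset (Fin N)) (T : Finset (Fin m)) (n : ℕ) : Set (Euc d) :=
  {z | ∃ u : Euc d, ‖u‖ = 1 ∧
    (∀ i ∈ S, ⟪z, u⟫ ≤ ⟪x i, u⟫) ∧
    (∀ i ∉ S, ⟪x i, u⟫ + ((n : ℝ) + 1)⁻¹ ≤ ⟪z, u⟫) ∧
    (∀ j ∈ T, ⟪z, u⟫ ≤ ⟪y j, u⟫) ∧
    (∀ j ∉ T, ⟪y j, u⟫ + ((n : ℝ) + 1)⁻¹ ≤ ⟪z, u⟫)}

open Classical in
lemma memSet_eq_iff {d k : ℕ} {p : Fin k → Euc d} {u z : Euc d} {S : Finset (Fin k)} :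
    memSet p u z = S ↔ ∀ i, i ∈ S ↔ ⟪z, u⟫ ≤ ⟪p i, u⟫ := by
  rw [Finset.ext_iff]
  constructor
  · intro h i; rw [← h i]; simp [memSet, mem_halfSpace]
  · intro h i; rw [h i]; simp [memSet, mem_halfSpace]

lemma isClosed_approxSet {d N m : ℕ} (x : Fin N → Euc d) (y : Fin m → Euc d)
    (S : Finset (Fin N)) (T : Finset (Fin m)) (n : ℕ) :
    IsClosed (approxSet x y S T n) := by
  refine IsSeqClosed.isClosed ?_
  intro zs z hmem hz
  choose u hu h1 h2 h3 h4 using hmem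
  have husph : ∀ k, u k ∈ Metric.sphere (0 : Euc d) 1 := by
    intro k; simpa [mem_sphere_zero_iff_norm] using hu k
  obtain ⟨v, hv, φ, hφ, hφt⟩ := (isCompact_sphere (0 : Euc d) 1).tendsto_subseq husph
  have hzφ : Tendsto (fun k => zs (φ k)) atTop (𝓝 z) := hz.comp hφ.tendsto_atTop
  have hinner : ∀ w : Euc d, Tendsto (fun k => ⟪w, u (φ k)⟫) atTop (𝓝 ⟪w, v⟫) :=
    fun w => Tendsto.inner tendsto_const_nhds hφt
  have hzinner : Tendsto (fun k => ⟪zs (φ k), u (φ k)⟫) atTop (𝓝 ⟪z, v⟫) :=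
    Tendsto.inner hzφ hφt
  refine ⟨v, by simpa [mem_sphere_zero_iff_norm] using hv, ?_, ?_, ?_, ?_⟩
  · exact fun i hi => le_of_tendsto_of_tendsto' hzinner (hinner (x i))
      (fun k => h1 (φ k) i hi)
  · exact fun i hi => le_of_tendsto_of_tendsto'
      ((hinner (x i)).add tendsto_const_nhds) hzinner (fun k => h2 (φ k) i hi)
  · exact fun j hj => le_of_tendsto_of_tendsto' hzinner (hinner (y j))
      (fun k => h3 (φ k) j hj)
  · exact fun j hj => le_of_tendsto_of_tendsto'
      ((hinner (y j)).add tendsto_const_nhds) hzinner (fun k => h4 (φ k) j hj)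

open Classical in
lemma goodSet_eq_iUnion {d N m : ℕ} (x : Fin N → Euc d) (y : Fin m → Euc d)
    (S : Finset (Fin N)) (T : Finset (Fin m)) :
    goodSet x y S T = ⋃ n : ℕ, approxSet x y S T n := by
  ext z
  simp only [mem_iUnion]
  constructor
  · rintro ⟨u, hu, hS, hT⟩
    rw [memSet_eq_iff] at hS hT
    set F : Finset ℝ := insert 1
      (((Finset.univ.filter (· ∉ S)).image fun i => ⟪z, u⟫ - ⟪x i, u⟫) ∪
       ((Finset.univ.filter (· ∉ T)).image fun j => ⟪z, u⟫ - ⟪y j, u⟫)) with hF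
    have hFne : F.Nonempty := ⟨1, Finset.mem_insert_self _ _⟩
    have hFpos : ∀ a ∈ F, 0 < a := by
      intro a ha
      rw [hF, Finset.mem_insert, Finset.mem_union] at ha
      rcases ha with h | h | h
      · simp [h]
      · obtain ⟨i, hi, rfl⟩ := Finset.mem_image.1 h
        rw [Finset.mem_filter] at hi
        have := hS i
        have : ¬ ⟪z, u⟫ ≤ ⟪x i, u⟫ := fun hle => hi.2 (this.2 hle)
        linarith [lt_of_not_ge this]
      · obtain ⟨j, hj, rfl⟩ := Finset.mem_image.1 h
        rw [Finset.mem_filter] at hj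
        have := hT j
        have : ¬ ⟪z, u⟫ ≤ ⟪y j, u⟫ := fun hle => hj.2 (this.2 hle)
        linarith [lt_of_not_ge this]
    have hεpos : 0 < F.min' hFne := hFpos _ (F.min'_mem hFne)
    obtain ⟨n, hn⟩ := exists_nat_one_div_lt hεpos
    refine ⟨n, u, hu, fun i hi => (hS i).1 hi, ?_, fun j hj => (hT j).1 hj, ?_⟩
    · intro i hi
      have hmem : ⟪z, u⟫ - ⟪x i, u⟫ ∈ F := by
        rw [hF, Finset.mem_insert, Finset.mem_union]
        exact Or.inr (Or.inl (Finset.mem_image.2 ⟨i, by simp [hi], rfl⟩))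
      have := F.min'_le _ hmem
      have h1n : ((n : ℝ) + 1)⁻¹ < ⟪z, u⟫ - ⟪x i, u⟫ := by
        rw [inv_eq_one_div]; exact lt_of_lt_of_le hn this
      linarith
    · intro j hj
      have hmem : ⟪z, u⟫ - ⟪y j, u⟫ ∈ F := by
        rw [hF, Finset.mem_insert, Finset.mem_union]
        exact Or.inr (Or.inr (Finset.mem_image.2 ⟨j, by simp [hj], rfl⟩))
      have := F.min'_le _ hmem
      have h1n : ((n : ℝ) + 1)⁻¹ < ⟪z, u⟫ - ⟪y j, u⟫ := by
        rw [inv_eq_one_div]; exact lt_of_lt_of_le hn this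
      linarith
  · rintro ⟨n, u, hu, h1, h2, h3, h4⟩
    have hpos : (0 : ℝ) < ((n : ℝ) + 1)⁻¹ := by positivity
    refine ⟨u, hu, memSet_eq_iff.2 fun i => ?_, memSet_eq_iff.2 fun j => ?_⟩
    · constructor
      · exact h1 i
      · intro hle
        by_contra hi
        have := h2 i hi
        linarith
    · constructor
      · exact h3 j
      · intro hle
        by_contra hj
        have := h4 j hj
        linarith

lemma measurableSet_goodSet {d N m : ℕ} (x : Fin N → Euc d) (y : Fin m → Euc d)
    (S : Finset (Fin N)) (T : Finset (Fin m)) :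
    MeasurableSet (goodSet x y S T) := by
  rw [goodSet_eq_iUnion]
  exact MeasurableSet.iUnion fun n => (isClosed_approxSet x y S T n).measurableSet

def valPair {N m : ℕ} (S : Finset (Fin N)) (T : Finset (Fin m)) : ℝ≥0∞ :=
  ((N : ℝ≥0∞)⁻¹ * S.card) / ((m : ℝ≥0∞)⁻¹ * T.card)

def condPair {N m : ℕ} (Δ : ℝ) (S : Finset (Fin N)) (T : Finset (Fin m)) : Prop :=
  (N : ℝ≥0∞)⁻¹ * S.card = 0 ∨ ENNReal.ofReal Δ < (m : ℝ≥0∞)⁻¹ * T.card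

lemma thrDepth_eq_iInf {d N m : ℕ} (x : Fin N → Euc d) (y : Fin m → Euc d)
    (Δ : ℝ) (z : Euc d) :
    thrDepth (empMeasure x) (empMeasure y) Δ z
      = ⨅ (p : Finset (Fin N) × Finset (Fin m))
          (_ : condPair Δ p.1 p.2 ∧ z ∈ goodSet x y p.1 p.2), valPair p.1 p.2 := by
  apply le_antisymm
  · refine le_iInf fun p => le_iInf fun hp => ?_
    obtain ⟨hcond, u, hu, hS, hT⟩ := hp
    rw [thrDepth]
    refine iInf_le_of_le u (iInf_le_of_le ⟨hu, ?_⟩ ?_)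
    · rw [empMeasure_apply' x u z, empMeasure_apply' y u z, hS, hT]
      exact hcond
    · rw [empMeasure_apply' x u z, empMeasure_apply' y u z, hS, hT, valPair]
  · refine le_iInf fun u => le_iInf fun hu => ?_
    obtain ⟨hu1, hcond⟩ := hu
    refine iInf_le_of_le (memSet x u z, memSet y u z) (iInf_le_of_le ⟨?_, ?_⟩ ?_)
    · rw [condPair, ← empMeasure_apply' x u z, ← empMeasure_apply' y u z]
      exact hcond
    · exact ⟨u, hu1, rfl, rfl⟩
    · rw [valPair, ← empMeasure_apply' x u z, ← empMeasure_apply' y u z]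

/-- Lemma S3.2 of the paper: for empirical measures `μ̂` and `Q̂`, the thresholded
point depth `x ↦ D̂(x | Q̂, μ̂, Δ)` is Borel measurable and takes finitely many values. -/
theorem thrDepth_measurable_and_finite_range
    (d m N : ℕ) (hd : 1 ≤ d) (hm : 1 ≤ m) (hN : 1 ≤ N)
    (Δ : ℝ) (hΔ0 : 0 < Δ) (hΔhalf : Δ < 1 / 2)
    (y : Fin m → Euc d) (x : Fin N → Euc d) :
    Measurable (fun z : Euc d => thrDepth (empMeasure x) (empMeasure y) Δ z) ∧
    (Set.range (fun z : Euc d => thrDepth (empMeasure x) (empMeasure y) Δ z)).Finite := by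
  classical
  have key : (fun z : Euc d => thrDepth (empMeasure x) (empMeasure y) Δ z)
      = fun z => ⨅ (p : Finset (Fin N) × Finset (Fin m))
          (_ : condPair Δ p.1 p.2 ∧ z ∈ goodSet x y p.1 p.2), valPair p.1 p.2 :=
    funext fun z => thrDepth_eq_iInf x y Δ z
  rw [key]
  constructor
  · refine Measurable.iInf fun p => ?_
    have heq : (fun z : Euc d =>
          ⨅ (_ : condPair Δ p.1 p.2 ∧ z ∈ goodSet x y p.1 p.2), valPair p.1 p.2)
        = fun z => if z ∈ {w : Euc d | condPair Δ p.1 p.2 ∧ w ∈ goodSet x y p.1 p.2}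
            then valPair p.1 p.2 else ⊤ := by
      funext z
      by_cases h : condPair Δ p.1 p.2 ∧ z ∈ goodSet x y p.1 p.2
      · rw [iInf_pos h]; exact (if_pos h).symm
      · rw [iInf_neg h]; exact (if_neg h).symm
    rw [heq]
    refine Measurable.ite ?_ measurable_const measurable_const
    by_cases hc : condPair Δ p.1 p.2
    · have : {w : Euc d | condPair Δ p.1 p.2 ∧ w ∈ goodSet x y p.1 p.2}
          = goodSet x y p.1 p.2 := by ext w; simp [hc]
      rw [this]; exact measurableSet_goodSet x y p.1 p.2
    · have : {w : Euc d | condPair Δ p.1 p.2 ∧ w ∈ goodSet x y p.1 p.2} = ∅ := by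
        ext w; simp [hc]
      rw [this]; exact MeasurableSet.empty
  · refine Set.Finite.subset ((Set.finite_range
      (fun p : Finset (Fin N) × Finset (Fin m) => valPair p.1 p.2)).insert ⊤) ?_
    rintro w ⟨z, rfl⟩
    obtain ⟨p, hp⟩ := Finite.exists_min (fun p : Finset (Fin N) × Finset (Fin m) =>
      ⨅ (_ : condPair Δ p.1 p.2 ∧ z ∈ goodSet x y p.1 p.2), valPair p.1 p.2)
    have hmin : (⨅ (q : Finset (Fin N) × Finset (Fin m))
          (_ : condPair Δ q.1 q.2 ∧ z ∈ goodSet x y q.1 q.2), valPair q.1 q.2)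
        = ⨅ (_ : condPair Δ p.1 p.2 ∧ z ∈ goodSet x y p.1 p.2), valPair p.1 p.2 :=
      le_antisymm (iInf_le _ p) (le_iInf hp)
    beta_reduce
    rw [hmin]
    by_cases h : condPair Δ p.1 p.2 ∧ z ∈ goodSet x y p.1 p.2
    · rw [iInf_pos h]
      exact Set.mem_insert_of_mem _ ⟨p, rfl⟩
    · rw [iInf_neg h]
      exact Set.mem_insert _ _
end
end

section
/- Work in dimension d = 2. For y ∈ [0,1], let μ_y be the pushforward of the uniform distribution on [0,1] under the map x ↦ (x, y), i.e., the uniform (arc-length) probability measure on the horizontal segment [0,1] × {y} of the unit square, and let Q be the uniform probability measure (normalized Lebesgue measure) on the unit square [0,1]². Then the curve depth of the segment at height y satisfies ∫ D(s | Q, μ_y) dμ_y(s) = min(y, 1−y) = 1/2 − |y − 1/2|. (Parallel-segments-on-a-rectangle example of Section 5.1 of the paper; here Q = Q_P is the averaged measure of the model in which a horizontal segment 𝒞_Y at a uniformly distributed random height Y ∼ Unif[0,1] is observed.) -/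
open MeasureTheory Set Filter
open scoped ENNReal RealInnerProductSpace

noncomputable section

/-- The arc-length (uniform) probability measure on the horizontal segment
`[0,1] × {y}` of the plane. -/
def segMeasure (y : ℝ) : Measure (Euc 2) :=
  (volume.restrict (Set.Icc (0:ℝ) 1)).map
    (fun x => (WithLp.equiv 2 (Fin 2 → ℝ)).symm ![x, y])

/-- The uniform probability measure on the unit square `[0,1]²`. -/
def squareMeasure : Measure (Euc 2) :=
  volume.restrict {p : Euc 2 | p 0 ∈ Set.Icc (0:ℝ) 1 ∧ p 1 ∈ Set.Icc (0:ℝ) 1}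

/-! For `p = (s, y)` and a unit vector `u`, the halfspace `H_{u,p}` contains the rectangle
`I × J`, where `I = {x | (x, y) ∈ H_{u,p}}` is the trace of `H_{u,p}` on the segment and `J` is
the part of `[0,1]` on the `u 1`-side of `y`. Hence `Q(H) ≥ |I| |J| ≥ μ_y(H) · min(y, 1 - y)`,
and `μ_y(H) = |I| > 0` when `0 < s < 1`. The vertical directions `±e₂` give `μ_y(H) = 1` and
`Q(H) = y`, resp. `1 - y`, so `D(p) = min(y, 1 - y)` for `μ_y`-almost every `p`. -/

lemma isometry_horizontal (y : ℝ) : Isometry fun x : ℝ => !₂[x, y] :=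
  Isometry.of_dist_eq fun x x' => by
    simp [EuclideanSpace.dist_eq, Fin.sum_univ_two, Real.dist_eq, Real.sqrt_sq_eq_abs]

lemma measurableEmbedding_horizontal (y : ℝ) : MeasurableEmbedding fun x : ℝ => !₂[x, y] :=
  (isometry_horizontal y).isClosedEmbedding.measurableEmbedding

lemma segMeasure_apply (y : ℝ) (S : Set (Euc 2)) :
    segMeasure y S = volume ((fun x : ℝ => !₂[x, y]) ⁻¹' S ∩ Icc 0 1) := by
  rw [segMeasure, ← Measure.restrict_apply' measurableSet_Icc]
  exact (measurableEmbedding_horizontal y).map_apply _ S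

lemma segMeasure_univ (y : ℝ) : segMeasure y univ = 1 := by
  simp [segMeasure_apply]

lemma volume_setOf_coord_mem (A B : Set ℝ) :
    volume {p : Euc 2 | p 0 ∈ A ∧ p 1 ∈ B} = volume A * volume B := by
  have hAB : {p : Euc 2 | p 0 ∈ A ∧ p 1 ∈ B}
      = (MeasurableEquiv.toLp 2 (Fin 2 → ℝ)).symm ⁻¹' univ.pi ![A, B] := by
    ext p
    simp [Set.mem_pi, Fin.forall_fin_two, MeasurableEquiv.coe_toLp_symm]
  rw [hAB,
    (EuclideanSpace.volume_preserving_symm_measurableEquiv_toLp (Fin 2)).measure_preimage_equiv,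
    volume_pi_pi, Fin.prod_univ_two]
  rfl

lemma squareMeasure_setOf_coord_mem (A B : Set ℝ) :
    squareMeasure {p : Euc 2 | p 0 ∈ A ∧ p 1 ∈ B}
      = volume (A ∩ Icc 0 1) * volume (B ∩ Icc 0 1) := by
  rw [squareMeasure, Measure.restrict_apply' ?_, ← volume_setOf_coord_mem]
  · congr 1
    ext p
    simp only [mem_inter_iff, mem_ofPred_eq]
    tauto
  · exact (measurableSet_Icc.preimage (by fun_prop)).inter
      (measurableSet_Icc.preimage (by fun_prop))

def halfLine (a c : ℝ) : Set ℝ := {t | a * c ≤ t * c}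

@[simp] lemma halfLine_zero (a : ℝ) : halfLine a 0 = univ := by
  simp [halfLine]

lemma volume_halfLine_inter_Icc_of_pos {a c : ℝ} (ha : a ∈ Icc (0:ℝ) 1) (hc : 0 < c) :
    volume (halfLine a c ∩ Icc 0 1) = ENNReal.ofReal (1 - a) := by
  have : halfLine a c ∩ Icc 0 1 = Icc a 1 := by
    ext t
    simp only [halfLine, mem_inter_iff, mem_ofPred_eq, mem_Icc, mul_le_mul_iff_left₀ hc]
    constructor
    · rintro ⟨hat, -, ht1⟩; exact ⟨hat, ht1⟩
    · rintro ⟨hat, ht1⟩; exact ⟨hat, ha.1.trans hat, ht1⟩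
  rw [this, Real.volume_Icc]

lemma volume_halfLine_inter_Icc_of_neg {a c : ℝ} (ha : a ∈ Icc (0:ℝ) 1) (hc : c < 0) :
    volume (halfLine a c ∩ Icc 0 1) = ENNReal.ofReal a := by
  have : halfLine a c ∩ Icc 0 1 = Icc 0 a := by
    ext t
    simp only [halfLine, mem_inter_iff, mem_ofPred_eq, mem_Icc, mul_le_mul_right_of_neg hc]
    constructor
    · rintro ⟨hta, ht0, -⟩; exact ⟨ht0, hta⟩
    · rintro ⟨ht0, hta⟩; exact ⟨hta, ht0, hta.trans ha.2⟩
  rw [this, Real.volume_Icc, sub_zero]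

lemma ofReal_min_le_volume_halfLine_inter_Icc {a : ℝ} (ha : a ∈ Icc (0:ℝ) 1) (c : ℝ) :
    ENNReal.ofReal (min a (1 - a)) ≤ volume (halfLine a c ∩ Icc 0 1) := by
  rcases lt_trichotomy c 0 with hc | rfl | hc
  · rw [volume_halfLine_inter_Icc_of_neg ha hc]
    exact ENNReal.ofReal_le_ofReal (min_le_left _ _)
  · rw [halfLine_zero, univ_inter, Real.volume_Icc, sub_zero]
    exact ENNReal.ofReal_le_ofReal ((min_le_right _ _).trans (by linarith [ha.1]))
  · rw [volume_halfLine_inter_Icc_of_pos ha hc]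
    exact ENNReal.ofReal_le_ofReal (min_le_right _ _)

lemma mem_halfSpace_iff {u p q : Euc 2} :
    q ∈ halfSpace u p ↔ p 0 * u 0 + p 1 * u 1 ≤ q 0 * u 0 + q 1 * u 1 := by
  simp [halfSpace, PiLp.inner_apply, Fin.sum_univ_two, mul_comm]

lemma setOf_mem_halfLine_subset_halfSpace (u : Euc 2) (s y : ℝ) :
    {q : Euc 2 | q 0 ∈ halfLine s (u 0) ∧ q 1 ∈ halfLine y (u 1)} ⊆ halfSpace u !₂[s, y] := by
  rintro q ⟨hq0, hq1⟩
  rw [mem_halfSpace_iff]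
  simp only [halfLine, mem_ofPred_eq] at hq0 hq1
  simp only [Matrix.cons_val_zero, Matrix.cons_val_one]
  linarith

lemma halfSpace_eq_setOf_mem_halfLine {u : Euc 2} (hu : u 0 = 0) (s y : ℝ) :
    halfSpace u !₂[s, y] = {q : Euc 2 | q 0 ∈ halfLine s (u 0) ∧ q 1 ∈ halfLine y (u 1)} := by
  ext q
  simp [mem_halfSpace_iff, halfLine, hu]

lemma preimage_horizontal_halfSpace (u : Euc 2) (s y : ℝ) :
    (fun x : ℝ => !₂[x, y]) ⁻¹' halfSpace u !₂[s, y] = halfLine s (u 0) := by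
  ext x
  simp [mem_halfSpace_iff, halfLine]

lemma segMeasure_halfSpace (u : Euc 2) (s y : ℝ) :
    segMeasure y (halfSpace u !₂[s, y]) = volume (halfLine s (u 0) ∩ Icc 0 1) := by
  rw [segMeasure_apply, preimage_horizontal_halfSpace]

lemma segMeasure_mul_le_squareMeasure_halfSpace {y : ℝ} (hy : y ∈ Icc (0:ℝ) 1) (u : Euc 2)
    (s : ℝ) : segMeasure y (halfSpace u !₂[s, y]) * ENNReal.ofReal (min y (1 - y))
      ≤ squareMeasure (halfSpace u !₂[s, y]) :=
  calc segMeasure y (halfSpace u !₂[s, y]) * ENNReal.ofReal (min y (1 - y))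
      ≤ volume (halfLine s (u 0) ∩ Icc 0 1) * volume (halfLine y (u 1) ∩ Icc 0 1) := by
        rw [segMeasure_halfSpace]
        gcongr
        exact ofReal_min_le_volume_halfLine_inter_Icc hy _
    _ = squareMeasure {q : Euc 2 | q 0 ∈ halfLine s (u 0) ∧ q 1 ∈ halfLine y (u 1)} :=
        (squareMeasure_setOf_coord_mem _ _).symm
    _ ≤ squareMeasure (halfSpace u !₂[s, y]) :=
        measure_mono (setOf_mem_halfLine_subset_halfSpace u s y)

lemma le_pointDepth {y s : ℝ} (hy : y ∈ Icc (0:ℝ) 1) (hs : s ∈ Ioo (0:ℝ) 1) :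
    ENNReal.ofReal (min y (1 - y)) ≤ pointDepth squareMeasure (segMeasure y) !₂[s, y] := by
  refine le_iInf₂ fun u _ => ?_
  have hpos : segMeasure y (halfSpace u !₂[s, y]) ≠ 0 := by
    rw [segMeasure_halfSpace]
    have hs_pos : 0 < ENNReal.ofReal (min s (1 - s)) := by simpa using hs
    exact (hs_pos.trans_le
      (ofReal_min_le_volume_halfLine_inter_Icc (Ioo_subset_Icc_self hs) _)).ne'
  have hfin : segMeasure y (halfSpace u !₂[s, y]) ≠ ⊤ :=
    ne_top_of_le_ne_top (by simp [segMeasure_univ]) (measure_mono (subset_univ _))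
  rw [ENNReal.le_div_iff_mul_le (Or.inl hpos) (Or.inl hfin), mul_comm]
  exact segMeasure_mul_le_squareMeasure_halfSpace hy u s

lemma pointDepth_le_volume_halfLine_inter_Icc {c : ℝ} (hc : |c| = 1) (s y : ℝ) :
    pointDepth squareMeasure (segMeasure y) !₂[s, y] ≤ volume (halfLine y c ∩ Icc 0 1) := by
  set u : Euc 2 := EuclideanSpace.single 1 c
  have hu0 : u 0 = 0 := by simp [u]
  have hu1 : u 1 = c := by simp [u]
  refine iInf₂_le_of_le u (by simp [u, hc]) (le_of_eq ?_)
  rw [segMeasure_halfSpace, hu0, halfLine_zero, univ_inter, Real.volume_Icc,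
    halfSpace_eq_setOf_mem_halfLine hu0, squareMeasure_setOf_coord_mem, hu0, hu1, halfLine_zero,
    univ_inter, Real.volume_Icc]
  simp

lemma pointDepth_le_s19 {y : ℝ} (hy : y ∈ Icc (0:ℝ) 1) (s : ℝ) :
    pointDepth squareMeasure (segMeasure y) !₂[s, y] ≤ ENNReal.ofReal (min y (1 - y)) := by
  rw [ENNReal.ofReal_min, le_min_iff, ← volume_halfLine_inter_Icc_of_neg hy neg_one_lt_zero,
    ← volume_halfLine_inter_Icc_of_pos hy one_pos]
  exact ⟨pointDepth_le_volume_halfLine_inter_Icc (by simp) s y,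
    pointDepth_le_volume_halfLine_inter_Icc (by simp) s y⟩

lemma curveDepth_squareMeasure_segMeasure {y : ℝ} (hy : y ∈ Icc (0:ℝ) 1) :
    curveDepth squareMeasure (segMeasure y) = ENNReal.ofReal (min y (1 - y)) := by
  calc curveDepth squareMeasure (segMeasure y)
      = ∫⁻ s in Icc 0 1, pointDepth squareMeasure (segMeasure y) !₂[s, y] :=
        (measurableEmbedding_horizontal y).lintegral_map _
    _ = ∫⁻ _ in Ioo (0:ℝ) 1, ENNReal.ofReal (min y (1 - y)) := by
        rw [← setLIntegral_congr Ioo_ae_eq_Icc]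
        exact setLIntegral_congr_fun measurableSet_Ioo fun s hs =>
          (pointDepth_le_s19 hy s).antisymm (le_pointDepth hy hs)
    _ = ENNReal.ofReal (min y (1 - y)) := by simp

lemma min_self_one_sub (y : ℝ) : min y (1 - y) = 1 / 2 - |y - 1 / 2| := by
  rcases le_total y (1 / 2) with h | h
  · rw [abs_of_nonpos (by linarith), min_eq_left (by linarith)]; ring
  · rw [abs_of_nonneg (by linarith), min_eq_right (by linarith)]; ring

/-- Parallel-segments-on-a-rectangle example of Section 5.1 of the paper: the curve
depth of the horizontal segment at height `y ∈ [0,1]`, with respect to the uniform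
measure on the unit square (the averaged measure `Q_P` of the model `𝒞_Y`,
`Y ~ Unif[0,1]`), equals `min(y, 1−y) = 1/2 − |y − 1/2|`. -/
theorem parallel_segments_depth (y : ℝ) (hy : y ∈ Set.Icc (0:ℝ) 1) :
    curveDepth squareMeasure (segMeasure y) = ENNReal.ofReal (min y (1 - y)) ∧
    curveDepth squareMeasure (segMeasure y) = ENNReal.ofReal (1 / 2 - |y - 1 / 2|) := by
  rw [← min_self_one_sub, and_self]
  exact curveDepth_squareMeasure_segMeasure hy
end
end
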